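/- Fix d ≥ 1 and α ∈ (0,2). There exists C = C(d,α) > 0 such that for all n ≥ 1 and all w ∈ ℤ^d with 0 < ‖w‖_∞ ≤ n/2, we have 1/(n^α λ_w^{(α,n)})² ≤ C / ‖w‖^{2α}. -/

import Mathlib

open Real

noncomputable def znorm (d : ℕ) (z : Fin d → ℤ) : ℝ :=
  Real.sqrt (∑ i, ((z i : ℝ)) ^ 2)

/-- `c^{(α)} = (∑_{z ∈ ℤ^d \ {0}} ‖z‖^{-(d+α)})⁻¹`. -/
noncomputable def cAlpha (d : ℕ) (α : ℝ) : ℝ :=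
  (∑' z : {z : Fin d → ℤ // z ≠ 0}, znorm d z.1 ^ (-((d : ℝ) + α)))⁻¹

/-- `λ_w^{(α,n)} = c^{(α)} ∑_{y ∈ ℤ^d \ {0}} sin²(π y·w/n)/‖y‖^{d+α}`. -/
noncomputable def lamEig (d : ℕ) (α : ℝ) (n : ℕ) (w : Fin d → ℤ) : ℝ :=
  cAlpha d α *
    ∑' y : {y : Fin d → ℤ // y ≠ 0},
      Real.sin (π * (∑ i, (y.1 i : ℝ) * (w i : ℝ)) / n) ^ 2 /
        znorm d y.1 ^ ((d : ℝ) + α)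

/-!
Since `sin² a + sin² (a + b) = 1 - cos (2a + b) cos b`, two phases differing by an angle in
`[π/4, 3π/4]` cannot both have small sine. Let `M = ‖w‖_∞` and `k ≈ n / (2M)`, and shift by
`v = ± k eᵢ` along a coordinate where `|wᵢ| = M`, so that `π v·w / n ∈ [π/4, π/2]`. Pairing every
`y ∈ {1, …, k}^d` with `y + v`, all of norm `≲ √d k`, bounds the sum defining `λ_w` below by a
multiple of `k^d / k^(d+α) = k^(-α) ≳ (‖w‖ / n)^α`.
-/

lemma znorm_nonneg (d : ℕ) (z : Fin d → ℤ) : 0 ≤ znorm d z := sqrt_nonneg _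

lemma abs_le_znorm (d : ℕ) (z : Fin d → ℤ) (i : Fin d) : |(z i : ℝ)| ≤ znorm d z := by
  rw [← sqrt_sq_eq_abs]
  exact sqrt_le_sqrt (Finset.single_le_sum (fun j _ => sq_nonneg (z j : ℝ)) (Finset.mem_univ i))

lemma znorm_pos {d : ℕ} {z : Fin d → ℤ} (hz : z ≠ 0) : 0 < znorm d z := by
  obtain ⟨i, hi⟩ := Function.ne_iff.mp hz
  exact (abs_pos.mpr (Int.cast_ne_zero.mpr hi)).trans_le (abs_le_znorm d z i)

lemma znorm_le_sqrt_mul {d : ℕ} {z : Fin d → ℤ} {M : ℝ} (hM : 0 ≤ M)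
    (h : ∀ i, |(z i : ℝ)| ≤ M) : znorm d z ≤ √d * M := by
  rw [znorm, ← sqrt_sq hM, ← sqrt_mul (Nat.cast_nonneg d)]
  refine sqrt_le_sqrt ?_
  calc ∑ i, (z i : ℝ) ^ 2 ≤ ∑ _i : Fin d, M ^ 2 :=
        Finset.sum_le_sum fun i _ => sq_le_sq' (abs_le.mp (h i)).1 (abs_le.mp (h i)).2
    _ = d * M ^ 2 := by simp

theorem summable_znorm_rpow {d : ℕ} {r : ℝ} (hr : r < -d) :
    Summable fun z : Fin d → ℤ => znorm d z ^ r := by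
  let b := (EuclideanSpace.basisFun (Fin d) ℝ).toBasis
  let L := Submodule.span ℤ (Set.range b)
  have hL : Module.finrank ℤ L = d := by
    simp [L, Module.finrank_eq_card_basis (b.restrictScalars ℤ)]
  have hcoe (z : Fin d → ℤ) :
      ((b.restrictScalars ℤ).equivFun.symm z : EuclideanSpace ℝ (Fin d)) =
        WithLp.toLp 2 fun i => (z i : ℝ) := by
    ext i
    rw [Module.Basis.equivFun_symm_apply, Submodule.coe_sum]
    simp only [Submodule.coe_smul, Module.Basis.restrictScalars_apply]
    simp [b, Pi.single_apply]
  refine ((ZLattice.summable_norm_rpow L r (by rwa [hL])).comp_injective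
    (b.restrictScalars ℤ).equivFun.symm.injective).congr fun z => ?_
  rw [Function.comp_apply, ← Submodule.norm_coe, hcoe, EuclideanSpace.norm_eq]
  simp [znorm]

lemma cAlpha_pos {d : ℕ} (hd : 1 ≤ d) {α : ℝ} (hα : 0 < α) : 0 < cAlpha d α := by
  have hsum := (summable_znorm_rpow (d := d) (r := -((d : ℝ) + α)) (by linarith)).subtype
    {z | z ≠ 0}
  have hone : (Pi.single (⟨0, hd⟩ : Fin d) 1 : Fin d → ℤ) ≠ 0 := by simp
  exact inv_pos.mpr <| hsum.tsum_pos (fun z => rpow_nonneg (znorm_nonneg d _) _) ⟨_, hone⟩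
    (rpow_pos_of_pos (znorm_pos hone) _)

lemma cAlpha_nonneg (d : ℕ) (α : ℝ) : 0 ≤ cAlpha d α :=
  inv_nonneg.mpr (tsum_nonneg fun _ => rpow_nonneg (znorm_nonneg d _) _)

lemma one_sub_abs_cos_le_sin_sq_add_sin_add_sq (a b : ℝ) :
    1 - |cos b| ≤ sin a ^ 2 + sin (a + b) ^ 2 := by
  have hid : sin a ^ 2 + sin (a + b) ^ 2 = 1 - cos (2 * a + b) * cos b := by
    rw [sin_add, cos_add, cos_two_mul, sin_two_mul]
    linear_combination (1 + cos b ^ 2) * sin_sq_add_cos_sq a + cos a ^ 2 * sin_sq_add_cos_sq b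
  have hprod : cos (2 * a + b) * cos b ≤ |cos b| := by
    refine (le_abs_self _).trans ?_
    rw [abs_mul]
    exact mul_le_of_le_one_left (abs_nonneg _) (abs_cos_le_one _)
  linarith

lemma cos_pi_div_four_lt_one : cos (π / 4) < 1 := by
  simpa using
    cos_lt_cos_of_nonneg_of_le_pi le_rfl (by linarith [pi_pos]) (by positivity : 0 < π / 4)

lemma abs_cos_le_cos_pi_div_four {x : ℝ} (h₁ : π / 4 ≤ x) (h₂ : x ≤ 3 * π / 4) :
    |cos x| ≤ cos (π / 4) := by
  have hcos2 : cos (2 * x) ≤ 0 := cos_nonpos_of_pi_div_two_le_of_le (by linarith) (by linarith)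
  refine abs_le_of_sq_le_sq ?_ (cos_nonneg_of_neg_pi_div_two_le_of_le (by linarith [pi_pos])
    (by linarith [pi_pos]))
  rw [cos_sq x, cos_pi_div_four, div_pow, sq_sqrt (by norm_num : (0:ℝ) ≤ 2)]
  linarith

lemma exists_nat_half_le_le {x : ℝ} (hx : 1 ≤ x) : ∃ k : ℕ, 0 < k ∧ x / 2 ≤ k ∧ (k : ℝ) ≤ x := by
  refine ⟨⌊x⌋₊, Nat.floor_pos.mpr hx, ?_, Nat.floor_le (by linarith)⟩
  have h1 : (1 : ℝ) ≤ ⌊x⌋₊ := by exact_mod_cast Nat.floor_pos.mpr hx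
  linarith [Nat.lt_floor_add_one x]

lemma Summable.sum_add_comp_add_le_two_mul_tsum {β : Type*} [AddCommGroup β] {f : β → ℝ}
    (hf : Summable f) (h0 : ∀ y, 0 ≤ f y) (s : Finset β) (v : β) :
    ∑ y ∈ s, (f y + f (y + v)) ≤ 2 * ∑' y, f y := by
  rw [Finset.sum_add_distrib, two_mul]
  refine add_le_add (hf.sum_le_tsum s fun y _ => h0 y) ?_
  rw [← (Equiv.addRight v).tsum_eq f]
  exact ((Equiv.addRight v).summable_iff.mpr hf).sum_le_tsum s fun y _ => h0 _

/-- Vanishes at `y = 0` (as `sin 0 = 0`), so `lamEig` can be summed over all of `ℤ^d`. -/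
noncomputable def lamSummand (d : ℕ) (α : ℝ) (n : ℕ) (w y : Fin d → ℤ) : ℝ :=
  Real.sin (π * (∑ i, (y i : ℝ) * (w i : ℝ)) / n) ^ 2 / znorm d y ^ ((d : ℝ) + α)

section lamSummand

variable {d : ℕ} {α : ℝ} {n : ℕ} {w : Fin d → ℤ}

lemma lamSummand_nonneg (y : Fin d → ℤ) : 0 ≤ lamSummand d α n w y :=
  div_nonneg (sq_nonneg _) (rpow_nonneg (znorm_nonneg d _) _)

lemma summable_lamSummand (hα : 0 < α) : Summable (lamSummand d α n w) := by
  refine (summable_znorm_rpow (r := -((d : ℝ) + α)) (by linarith)).of_nonneg_of_le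
    lamSummand_nonneg fun y => ?_
  rw [rpow_neg (znorm_nonneg d y), ← one_div]
  exact div_le_div_of_nonneg_right (sin_sq_le_one _) (rpow_nonneg (znorm_nonneg d _) _)

lemma lamEig_eq_cAlpha_mul_tsum :
    lamEig d α n w = cAlpha d α * ∑' y, lamSummand d α n w y := by
  have hsupp : Function.support (lamSummand d α n w) ⊆ {y | y ≠ 0} := by
    rintro y hy rfl
    simp [lamSummand] at hy
  rw [lamEig, ← tsum_subtype_eq_of_support_subset hsupp]
  rfl

lemma sin_sq_div_rpow_le_lamSummand (hα : 0 ≤ α) {y : Fin d → ℤ} {R : ℝ} (hR : znorm d y ≤ R) :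
    sin (π * (∑ i, (y i : ℝ) * w i) / n) ^ 2 / R ^ ((d : ℝ) + α) ≤ lamSummand d α n w y := by
  rcases eq_or_ne y 0 with rfl | hy
  · simp [lamSummand]
  have hpos := znorm_pos hy
  exact div_le_div_of_nonneg_left (sq_nonneg _) (rpow_pos_of_pos hpos _)
    (rpow_le_rpow hpos.le hR (by positivity))

lemma one_sub_abs_cos_div_rpow_le_lamSummand_add (hα : 0 ≤ α) {y v : Fin d → ℤ} {R : ℝ}
    (hy : znorm d y ≤ R) (hyv : znorm d (y + v) ≤ R) :
    (1 - |cos (π * (∑ i, (v i : ℝ) * w i) / n)|) / R ^ ((d : ℝ) + α) ≤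
      lamSummand d α n w y + lamSummand d α n w (y + v) := by
  have hsum : ∑ i, ((y + v) i : ℝ) * w i = ∑ i, (y i : ℝ) * w i + ∑ i, (v i : ℝ) * w i := by
    simp [add_mul, Finset.sum_add_distrib]
  have htrig := one_sub_abs_cos_le_sin_sq_add_sin_add_sq
    (π * (∑ i, (y i : ℝ) * w i) / n) (π * (∑ i, (v i : ℝ) * w i) / n)
  rw [← add_div, ← mul_add, ← hsum] at htrig
  calc _ ≤ _ := div_le_div_of_nonneg_right htrig (rpow_nonneg ((znorm_nonneg d y).trans hy) _)
    _ = _ := add_div _ _ _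
    _ ≤ _ := add_le_add (sin_sq_div_rpow_le_lamSummand hα hy)
        (sin_sq_div_rpow_le_lamSummand hα hyv)

lemma rpow_neg_mul_le_tsum_lamSummand (hα : 0 < α) {k : ℕ} (hk : 0 < k) {v : Fin d → ℤ}
    (hv : ∀ i, |(v i : ℝ)| ≤ k) :
    (1 - |cos (π * (∑ i, (v i : ℝ) * w i) / n)|) / (2 * (2 * √d) ^ ((d : ℝ) + α)) *
      (k : ℝ) ^ (-α) ≤ ∑' y, lamSummand d α n w y := by
  set c := 1 - |cos (π * (∑ i, (v i : ℝ) * w i) / n)|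
  set B := Fintype.piFinset fun _ : Fin d => Finset.Icc (1 : ℤ) k
  have hkR : (0 : ℝ) < k := Nat.cast_pos.mpr hk
  have hB (y) (hy : y ∈ B) : ∀ i, |(y i : ℝ)| ≤ k ∧ |((y + v) i : ℝ)| ≤ 2 * k := by
    intro i
    obtain ⟨hy1, hyk⟩ := Finset.mem_Icc.mp (Fintype.mem_piFinset.mp hy i)
    have hy1 : (1 : ℝ) ≤ y i := by exact_mod_cast hy1
    have hyi : |(y i : ℝ)| ≤ k := abs_le.mpr ⟨by linarith, by exact_mod_cast hyk⟩
    refine ⟨hyi, ?_⟩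
    rw [Pi.add_apply, Int.cast_add]
    linarith [abs_add_le (y i : ℝ) (v i), hv i]
  have hpair (y) (hy : y ∈ B) : c / (√d * (2 * k)) ^ ((d : ℝ) + α) ≤
      lamSummand d α n w y + lamSummand d α n w (y + v) :=
    one_sub_abs_cos_div_rpow_le_lamSummand_add hα.le
      (znorm_le_sqrt_mul (by positivity) fun i => (hB y hy i).1.trans (by linarith))
      (znorm_le_sqrt_mul (by positivity) fun i => (hB y hy i).2)
  have hcard : (B.card : ℝ) = (k : ℝ) ^ d := by
    simp [B, Fintype.card_piFinset]
  have key := (Finset.sum_le_sum hpair).trans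
    ((summable_lamSummand hα).sum_add_comp_add_le_two_mul_tsum lamSummand_nonneg B v)
  have hpow : (√d * (2 * k)) ^ ((d : ℝ) + α) =
      (2 * √d) ^ ((d : ℝ) + α) * ((k : ℝ) ^ d * k ^ α) := by
    rw [show √d * (2 * k) = 2 * √d * k by ring, mul_rpow (by positivity) hkR.le, rpow_add hkR,
      rpow_natCast]
  rw [Finset.sum_const, nsmul_eq_mul, hcard, hpow, mul_div_assoc', mul_left_comm _ ((k : ℝ) ^ d),
    mul_div_mul_left _ _ (by positivity)] at key
  rw [rpow_neg hkR.le]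
  linarith [show c / (2 * (2 * √d) ^ ((d : ℝ) + α)) * ((k : ℝ) ^ α)⁻¹ =
    c / ((2 * √d) ^ ((d : ℝ) + α) * k ^ α) / 2 by ring]

end lamSummand

lemma exists_shift_abs_cos_le {d n : ℕ} {w : Fin d → ℤ} (hn : 0 < n) (hw : w ≠ 0)
    (hwn : ∀ i, |(w i : ℝ)| ≤ n / 2) :
    ∃ k : ℕ, 0 < k ∧ k * znorm d w ≤ √d * n ∧ ∃ v : Fin d → ℤ, (∀ i, |(v i : ℝ)| ≤ k) ∧
      |cos (π * (∑ i, (v i : ℝ) * w i) / n)| ≤ cos (π / 4) := by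
  obtain ⟨j, hj⟩ := Function.ne_iff.mp hw
  obtain ⟨i₀, -, hmax⟩ := Finset.univ.exists_max_image (fun i => |(w i : ℝ)|) ⟨j, Finset.mem_univ j⟩
  set M := |(w i₀ : ℝ)|
  have hM : 0 < M := (abs_pos.mpr (Int.cast_ne_zero.mpr hj)).trans_le (hmax j (Finset.mem_univ j))
  have hnR : (0 : ℝ) < n := Nat.cast_pos.mpr hn
  obtain ⟨k, hk, hk₁, hk₂⟩ := exists_nat_half_le_le (x := n / (2 * M))
    (by rw [le_div_iff₀ (by positivity)]; linarith [hwn i₀])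
  rw [div_div, div_le_iff₀ (by positivity)] at hk₁
  rw [le_div_iff₀ (by positivity)] at hk₂
  have hw₀ : w i₀ ≠ 0 := Int.cast_ne_zero.mp (abs_pos.mp hM)
  set v : Fin d → ℤ := Pi.single i₀ ((k : ℤ) * (w i₀).sign)
  have hvw : ∑ i, (v i : ℝ) * w i = k * M := by
    rw [Finset.sum_eq_single i₀ (fun i _ hi => by simp [v, hi]) (by simp)]
    simp only [v, Pi.single_eq_same, M]
    push_cast
    rw [mul_assoc, ← Int.cast_mul, Int.sign_mul_self_eq_abs, Int.cast_abs]
  refine ⟨k, hk, ?_, v, fun i => ?_, ?_⟩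
  · calc k * znorm d w ≤ k * (√d * M) := mul_le_mul_of_nonneg_left
          (znorm_le_sqrt_mul hM.le fun i => hmax i (Finset.mem_univ i)) (Nat.cast_nonneg k)
      _ ≤ √d * n := by nlinarith [sqrt_nonneg d]
  · rcases eq_or_ne i i₀ with rfl | hi
    · simp [v, abs_mul, ← Int.cast_abs, Int.abs_sign_of_ne_zero hw₀]
    · simp [v, hi]
  · rw [hvw]
    apply abs_cos_le_cos_pi_div_four
    · rw [le_div_iff₀ hnR]; nlinarith [pi_pos]
    · rw [div_le_iff₀ hnR]; nlinarith [pi_pos]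

noncomputable def lamEigLowerConst (d : ℕ) (α : ℝ) : ℝ :=
  cAlpha d α * (1 - cos (π / 4)) / (2 * (2 * √d) ^ ((d : ℝ) + α)) / √d ^ α

lemma lamEigLowerConst_pos {d : ℕ} (hd : 1 ≤ d) {α : ℝ} (hα : 0 < α) :
    0 < lamEigLowerConst d α := by
  have := cAlpha_pos hd hα
  have := sub_pos.mpr cos_pi_div_four_lt_one
  have : 0 < √d := sqrt_pos.mpr (by exact_mod_cast hd)
  unfold lamEigLowerConst
  positivity

theorem lamEigLowerConst_mul_znorm_rpow_le {d n : ℕ} {α : ℝ} {w : Fin d → ℤ} (hα : 0 < α)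
    (hn : 0 < n) (hw : w ≠ 0) (hwn : ∀ i, |(w i : ℝ)| ≤ n / 2) :
    lamEigLowerConst d α * znorm d w ^ α ≤ n ^ α * lamEig d α n w := by
  rw [lamEigLowerConst]
  obtain ⟨k, hk, hkw, v, hv, hcos⟩ := exists_shift_abs_cos_le hn hw hwn
  have hkR : (0 : ℝ) < k := Nat.cast_pos.mpr hk
  have hsd : 0 < √d := by
    obtain ⟨j, -⟩ := Function.ne_iff.mp hw
    exact sqrt_pos.mpr (Nat.cast_pos.mpr j.pos)
  set c := cAlpha d α * (1 - cos (π / 4)) / (2 * (2 * √d) ^ ((d : ℝ) + α)) with hc_def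
  have hc : 0 ≤ c := by
    have := cAlpha_nonneg d α
    have := sub_nonneg.mpr cos_pi_div_four_lt_one.le
    positivity
  have hlam : c * (k : ℝ) ^ (-α) ≤ lamEig d α n w := by
    have := cAlpha_nonneg d α
    calc c * (k : ℝ) ^ (-α)
        = cAlpha d α * ((1 - cos (π / 4)) / (2 * (2 * √d) ^ ((d : ℝ) + α)) * k ^ (-α)) := by
          rw [hc_def]; ring
      _ ≤ cAlpha d α * ((1 - |cos (π * (∑ i, (v i : ℝ) * w i) / n)|) /
            (2 * (2 * √d) ^ ((d : ℝ) + α)) * k ^ (-α)) := by gcongr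
      _ ≤ lamEig d α n w := by
          rw [lamEig_eq_cAlpha_mul_tsum]
          exact mul_le_mul_of_nonneg_left (rpow_neg_mul_le_tsum_lamSummand hα hk hv) this
  calc c / √d ^ α * znorm d w ^ α = c * (znorm d w / √d) ^ α := by
        rw [div_rpow (znorm_nonneg d w) hsd.le]; ring
    _ ≤ c * (n / k) ^ α := by
        have := znorm_nonneg d w
        gcongr c * ?_ ^ α
        rw [div_le_div_iff₀ hsd hkR]
        linarith
    _ = n ^ α * (c * (k : ℝ) ^ (-α)) := by
        rw [div_rpow (Nat.cast_nonneg n) hkR.le, rpow_neg hkR.le]; ring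
    _ ≤ n ^ α * lamEig d α n w := by gcongr

theorem stmt6 (d : ℕ) (hd : 1 ≤ d) (α : ℝ) (hα : α ∈ Set.Ioo (0:ℝ) 2) :
    ∃ C : ℝ, 0 < C ∧ ∀ n : ℕ, 1 ≤ n → ∀ w : Fin d → ℤ, w ≠ 0 →
      (∀ i, (|w i| : ℝ) ≤ n / 2) →
      1 / ((n : ℝ) ^ α * lamEig d α n w) ^ 2 ≤ C / znorm d w ^ (2 * α) := by
  set c := lamEigLowerConst d α
  have hc : 0 < c := lamEigLowerConst_pos hd hα.1
  refine ⟨1 / c ^ 2, by positivity, fun n hn w hw hwn => ?_⟩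
  have hlow : c * znorm d w ^ α ≤ n ^ α * lamEig d α n w :=
    lamEigLowerConst_mul_znorm_rpow_le hα.1 hn hw hwn
  have hpos : 0 < c * znorm d w ^ α := mul_pos hc (rpow_pos_of_pos (znorm_pos hw) α)
  calc 1 / ((n : ℝ) ^ α * lamEig d α n w) ^ 2 ≤ 1 / (c * znorm d w ^ α) ^ 2 :=
        one_div_le_one_div_of_le (by positivity) (pow_le_pow_left₀ hpos.le hlow 2)
    _ = 1 / c ^ 2 / znorm d w ^ (2 * α) := by
        rw [mul_comm 2 α, rpow_mul (znorm_nonneg d w), rpow_two, mul_pow, div_div]
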